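/- arXiv:1204.4959 — 2 statements merged into one kernel-verified Lean document; each statement's English description precedes it below -/
import Mathlib

section
/- Let X and Y be real normed vector spaces and let j : X → Y be an injective continuous linear map. Let K ⊆ X be a nonempty, convex, closed, bounded set which is compact in the weak topology of X. Let Φ : K → K be a map for which there exists q ∈ [0,1) such that ‖j(Φ(x)) − j(Φ(y))‖_Y ≤ q · ‖j(x) − j(y)‖_Y for all x, y ∈ K. Then Φ has exactly one fixed point in K. -/
/-!
The iterates `Φⁿ x₀` are Cauchy for the metric pulled back along `j`, and weak compactness of `K`
gives them a weak cluster point `x ∈ K`; `j x` is then a weak cluster point of the Cauchy sequence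
`j (Φⁿ x₀)`. In the completion of `Y` that sequence has a norm limit, which is also a weak limit,
and the weak topology is Hausdorff, so the limit is `j x` and `j (Φⁿ x₀) → j x` in `Y`. Since `Φ`
is Lipschitz for the pulled-back metric, `x` is a fixed point; `q < 1` makes it unique.
-/

open Filter Topology UniformSpace

section Contraction

variable {α β : Type*} [PseudoMetricSpace β] {f : α → β} {Φ : α → α} {q : ℝ}

theorem cauchySeq_apply_iterate_of_contraction (hq0 : 0 ≤ q) (hq1 : q < 1)
    (hΦ : ∀ a b, dist (f (Φ a)) (f (Φ b)) ≤ q * dist (f a) (f b)) (a : α) :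
    CauchySeq fun n ↦ f (Φ^[n] a) := by
  refine cauchySeq_of_le_geometric q (dist (f a) (f (Φ a))) hq1 fun n ↦ ?_
  induction n with
  | zero => simp
  | succ n ih =>
    calc dist (f (Φ^[n + 1] a)) (f (Φ^[n + 1 + 1] a))
        ≤ q * dist (f (Φ^[n] a)) (f (Φ^[n + 1] a)) := by
          simpa only [Function.iterate_succ_apply'] using hΦ _ _
      _ ≤ q * (dist (f a) (f (Φ a)) * q ^ n) := by gcongr
      _ = dist (f a) (f (Φ a)) * q ^ (n + 1) := by ring

theorem isFixedPt_of_tendsto_apply_iterate [T2Space β] (hf : Function.Injective f)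
    (hΦ : ∀ a b, dist (f (Φ a)) (f (Φ b)) ≤ q * dist (f a) (f b)) {a x : α}
    (hx : Tendsto (fun n ↦ f (Φ^[n] a)) atTop (𝓝 (f x))) : Function.IsFixedPt Φ x := by
  have h_succ : Tendsto (fun n ↦ f (Φ (Φ^[n] a))) atTop (𝓝 (f x)) := by
    simpa only [Function.comp_def, Function.iterate_succ_apply'] using
      hx.comp (tendsto_add_atTop_nat 1)
  have h_image : Tendsto (fun n ↦ f (Φ (Φ^[n] a))) atTop (𝓝 (f (Φ x))) := by
    refine tendsto_iff_dist_tendsto_zero.2 <|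
      squeeze_zero (fun _ ↦ dist_nonneg) (fun n ↦ hΦ _ x) ?_
    simpa using (tendsto_iff_dist_tendsto_zero.1 hx).const_mul q
  exact hf (tendsto_nhds_unique h_image h_succ)

theorem eq_of_isFixedPt_of_contraction [T0Space β] (hf : Function.Injective f) (hq1 : q < 1)
    (hΦ : ∀ a b, dist (f (Φ a)) (f (Φ b)) ≤ q * dist (f a) (f b)) {a b : α}
    (ha : Function.IsFixedPt Φ a) (hb : Function.IsFixedPt Φ b) : a = b := by
  have h := hΦ a b
  rw [ha, hb] at h
  have h_dist : dist (f a) (f b) = 0 := by nlinarith [dist_nonneg (x := f a) (y := f b)]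
  exact hf (Metric.inseparable_iff.2 h_dist).eq

end Contraction

theorem Cauchy.tendsto_of_mapClusterPt_toWeakSpace {𝕜 E ι : Type*} [RCLike 𝕜]
    [NormedAddCommGroup E] [NormedSpace 𝕜 E] {l : Filter ι} {v : ι → E} (hv : Cauchy (map v l))
    {y : E} (hy : MapClusterPt (toWeakSpace 𝕜 E y) l (toWeakSpace 𝕜 E ∘ v)) :
    Tendsto v l (𝓝 y) := by
  let c : E →L[𝕜] Completion E := Completion.toComplL
  obtain ⟨z, hz⟩ := CompleteSpace.complete (hv.map (Completion.uniformContinuous_coe E))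
  have hz_weak : Tendsto (WeakSpace.map c ∘ toWeakSpace 𝕜 E ∘ v) l (𝓝 (toWeakSpace 𝕜 _ z)) :=
    ((toWeakSpaceCLM 𝕜 (Completion E)).continuous.tendsto z).comp hz
  have hy_weak : MapClusterPt (WeakSpace.map c (toWeakSpace 𝕜 E y)) l
      (WeakSpace.map c ∘ toWeakSpace 𝕜 E ∘ v) :=
    hy.continuousAt_comp (WeakSpace.map c).continuous.continuousAt
  have hyz : toWeakSpace 𝕜 _ (y : Completion E) = toWeakSpace 𝕜 _ z :=
    eq_of_nhds_neBot (ClusterPt.mono hy_weak hz_weak)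
  obtain rfl := (toWeakSpace 𝕜 _).injective hyz
  exact (Completion.isUniformEmbedding_coe E).isEmbedding.tendsto_nhds_iff.2 hz

theorem fixed_point_of_weakly_compact_contraction_general
    {X Y : Type*} [NormedAddCommGroup X] [NormedSpace ℝ X]
    [NormedAddCommGroup Y] [NormedSpace ℝ Y]
    (j : X →L[ℝ] Y) (hj : Function.Injective j)
    (K : Set X) (hne : K.Nonempty)
    (hcpt : IsCompact ((toWeakSpace ℝ X) '' K))
    (Φ : K → K) (q : ℝ) (hq0 : 0 ≤ q) (hq1 : q < 1)
    (hcontr : ∀ x y : K, ‖j (Φ x : X) - j (Φ y : X)‖ ≤ q * ‖j (x : X) - j (y : X)‖) :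
    ∃! x : K, Φ x = x := by
  let f : K → Y := fun x ↦ j x
  have hf : Function.Injective f := hj.comp Subtype.val_injective
  have hΦ : ∀ a b, dist (f (Φ a)) (f (Φ b)) ≤ q * dist (f a) (f b) := by
    simpa only [dist_eq_norm] using hcontr
  obtain ⟨x₀, hx₀⟩ := hne
  let u : ℕ → K := fun n ↦ Φ^[n] ⟨x₀, hx₀⟩
  obtain ⟨-, ⟨x, hxK, rfl⟩, hx⟩ := hcpt.exists_mapClusterPt (f := atTop)
    (u := fun n ↦ toWeakSpace ℝ X (u n)) (by simp)
  have hx_image : MapClusterPt (toWeakSpace ℝ Y (f ⟨x, hxK⟩)) atTop (toWeakSpace ℝ Y ∘ f ∘ u) :=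
    hx.continuousAt_comp (f := WeakSpace.map j) (map_continuous _).continuousAt
  have hlim : Tendsto (f ∘ u) atTop (𝓝 (f ⟨x, hxK⟩)) :=
    (cauchySeq_apply_iterate_of_contraction hq0 hq1 hΦ _).tendsto_of_mapClusterPt_toWeakSpace
      hx_image
  have hfix := isFixedPt_of_tendsto_apply_iterate hf hΦ hlim
  exact ⟨_, hfix, fun y hy ↦ eq_of_isFixedPt_of_contraction hf hq1 hΦ hy hfix⟩

/-- A variant of Banach's contraction principle: if `K` is a nonempty, convex, closed,
bounded subset of a real normed space `X` which is compact in the weak topology of `X`,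
`j : X → Y` is an injective continuous linear map, and `Φ : K → K` satisfies
`‖j(Φ x) - j(Φ y)‖ ≤ q ‖j x - j y‖` for some `q < 1`, then `Φ` has exactly one fixed
point in `K`. -/
theorem fixed_point_of_weakly_compact_contraction
    {X Y : Type*} [NormedAddCommGroup X] [NormedSpace ℝ X]
    [NormedAddCommGroup Y] [NormedSpace ℝ Y]
    (j : X →L[ℝ] Y) (hj : Function.Injective j)
    (K : Set X) (hne : K.Nonempty) (hconv : Convex ℝ K) (hclosed : IsClosed K)
    (hbdd : Bornology.IsBounded K)
    (hcpt : IsCompact ((toWeakSpace ℝ X) '' K))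
    (Φ : K → K) (q : ℝ) (hq0 : 0 ≤ q) (hq1 : q < 1)
    (hcontr : ∀ x y : K, ‖j (Φ x : X) - j (Φ y : X)‖ ≤ q * ‖j (x : X) - j (y : X)‖) :
    ∃! x : K, Φ x = x :=
  fixed_point_of_weakly_compact_contraction_general j hj K hne hcpt Φ q hq0 hq1 hcontr
end

section
/- Let F : [0,∞) → ℝ be differentiable and nonnegative, let G : [0,∞) → ℝ be continuous and nonnegative, and let C > 0, M₁ > 0, δ₀ > 0 be constants with C·M₁·(δ₀ + δ₀² + δ₀³) < 1/2. Assume F′(t) + (1 − C·M₁·(F(t) + F(t)² + F(t)³))·G(t) ≤ 0 for all t ≥ 0 and F(0) < δ₀. Then for every t ≥ 0 one has F(t) + (1/2)·∫₀ᵗ G(s) ds ≤ F(0) < δ₀. -/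
open Set Topology intervalIntegral

/-!
As long as `F ≤ δ₀`, the smallness of `C M₁ (δ₀ + δ₀² + δ₀³)` keeps the coefficient of `G` above
`1/2`, so `F' + G/2 ≤ 0` and `F` does not increase. A first-exit-time argument then shows that `F`
never reaches `δ₀`, and integrating `F' + G/2 ≤ 0` gives the energy bound.
-/

lemma add_half_mul_nonpos_of_le {K δ x y g : ℝ} (hK : 0 ≤ K) (hx : 0 ≤ x) (hxδ : x ≤ δ)
    (hg : 0 ≤ g) (hsmall : K * (δ + δ ^ 2 + δ ^ 3) < 1 / 2)
    (h : y + (1 - K * (x + x ^ 2 + x ^ 3)) * g ≤ 0) :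
    y + 1 / 2 * g ≤ 0 := by
  have hcubic : K * (x + x ^ 2 + x ^ 3) ≤ K * (δ + δ ^ 2 + δ ^ 3) := by gcongr
  nlinarith [mul_nonneg (sub_nonneg.2 (hcubic.trans hsmall.le)) hg]

lemma hasDerivWithinAt_integral_Ici {g : ℝ → ℝ} {a x : ℝ} (hg : ContinuousOn g (Ici a))
    (hx : x ∈ Ici a) :
    HasDerivWithinAt (fun u => ∫ s in a..u, g s) (g x) (Ici x) x := by
  have hint : IntervalIntegrable g MeasureTheory.volume a x :=
    (hg.mono ((uIcc_of_le hx).trans_subset Icc_subset_Ici_self)).intervalIntegrable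
  have hmeas : StronglyMeasurableAtFilter g (𝓝[Ici a] x) :=
    hg.stronglyMeasurableAtFilter_nhdsWithin measurableSet_Ici x
  exact integral_hasDerivWithinAt_right hint
    (hmeas.filter_mono (nhdsWithin_mono _ (Ioi_subset_Ici_self.trans (Ici_subset_Ici.2 hx))))
    ((hg x hx).mono (Ioi_subset_Ici_self.trans (Ici_subset_Ici.2 hx)))

section OnIci

variable {f f' : ℝ → ℝ} {a : ℝ}

lemma forall_lt_of_deriv_nonpos_of_lt {δ : ℝ}
    (hf : ∀ x ∈ Ici a, HasDerivWithinAt f (f' x) (Ici a) x)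
    (hδ : ∀ x ∈ Ici a, f x < δ → f' x ≤ 0) (ha : f a < δ) :
    ∀ x ∈ Ici a, f x < δ := by
  by_contra! ⟨x, hx, hδx⟩
  set T := Ici a ∩ f ⁻¹' Ici δ
  have hcont : ContinuousOn f (Ici a) := fun y hy => (hf y hy).continuousWithinAt
  have hbdd : BddBelow T := ⟨a, fun _ hy => hy.1⟩
  obtain ⟨haT, hδT⟩ : sInf T ∈ T :=
    (hcont.preimage_isClosed_of_isClosed isClosed_Ici isClosed_Ici).csInf_mem ⟨x, hx, hδx⟩ hbdd
  have hbefore : ∀ y ∈ Ico a (sInf T), f y < δ := fun y hy =>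
    not_le.1 fun h => (csInf_le hbdd ⟨hy.1, h⟩).not_gt hy.2
  have hdecr : f (sInf T) ≤ f a :=
    image_le_of_deriv_right_le_deriv_boundary (hcont.mono Icc_subset_Ici_self)
      (fun y hy => (hf y hy.1).mono (Ici_subset_Ici.2 hy.1)) (B := fun _ => f a) le_rfl
      continuousOn_const (fun _ _ => hasDerivWithinAt_const _ _ _)
      (fun y hy => hδ y hy.1 (hbefore y hy)) ⟨haT, le_rfl⟩
  exact (hδT.trans hdecr).not_gt ha

lemma add_integral_le_of_deriv_add_nonpos {g : ℝ → ℝ}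
    (hf : ∀ x ∈ Ici a, HasDerivWithinAt f (f' x) (Ici a) x) (hg : ContinuousOn g (Ici a))
    (hfg : ∀ x ∈ Ici a, f' x + g x ≤ 0) :
    ∀ x ∈ Ici a, f x + ∫ s in a..x, g s ≤ f a := by
  intro x hx
  have hderiv : ∀ y ∈ Ici a,
      HasDerivWithinAt (fun u => f u + ∫ s in a..u, g s) (f' y + g y) (Ici y) y := fun y hy =>
    ((hf y hy).mono (Ici_subset_Ici.2 hy)).add (hasDerivWithinAt_integral_Ici hg hy)
  have hxa : uIcc a x ⊆ Ici a := (uIcc_of_le hx).trans_subset Icc_subset_Ici_self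
  have hcont : ContinuousOn (fun u => f u + ∫ s in a..u, g s) (Icc a x) := by
    rw [← uIcc_of_le hx]
    refine (ContinuousOn.mono (fun y hy => (hf y hy).continuousWithinAt) hxa).add ?_
    exact continuousOn_primitive_interval ((hg.mono hxa).integrableOn_compact isCompact_uIcc)
  simpa using image_le_of_deriv_right_le_deriv_boundary hcont (fun y hy => hderiv y hy.1)
    (B := fun _ => f a) (by simp) continuousOn_const (fun _ _ => hasDerivWithinAt_const _ _ _)
    (fun y hy => hfg y hy.1) ⟨hx, le_rfl⟩

end OnIci

theorem integrated_energy_bound_general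
    (F F' G : ℝ → ℝ) (C M₁ δ₀ : ℝ)
    (hC : 0 < C) (hM₁ : 0 < M₁)
    (hsmall : C * M₁ * (δ₀ + δ₀ ^ 2 + δ₀ ^ 3) < 1 / 2)
    (hF : ∀ t ∈ Ici (0 : ℝ), HasDerivWithinAt F (F' t) (Ici (0 : ℝ)) t)
    (hFpos : ∀ t ∈ Ici (0 : ℝ), 0 ≤ F t)
    (hG : ContinuousOn G (Ici (0 : ℝ)))
    (hGpos : ∀ t ∈ Ici (0 : ℝ), 0 ≤ G t)
    (hineq : ∀ t ∈ Ici (0 : ℝ),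
      F' t + (1 - C * M₁ * (F t + F t ^ 2 + F t ^ 3)) * G t ≤ 0)
    (h0 : F 0 < δ₀) :
    ∀ t ∈ Ici (0 : ℝ),
      F t + (1 / 2) * (∫ s in (0 : ℝ)..t, G s) ≤ F 0 ∧ F 0 < δ₀ := by
  have hdissip : ∀ t ∈ Ici (0 : ℝ), F t < δ₀ → F' t + 1 / 2 * G t ≤ 0 := fun t ht hlt =>
    add_half_mul_nonpos_of_le (mul_pos hC hM₁).le (hFpos t ht) hlt.le (hGpos t ht) hsmall
      (hineq t ht)
  have hbarrier : ∀ t ∈ Ici (0 : ℝ), F t < δ₀ :=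
    forall_lt_of_deriv_nonpos_of_lt hF
      (fun t ht hlt => by linarith [hdissip t ht hlt, hGpos t ht]) h0
  intro t ht
  refine ⟨?_, h0⟩
  rw [← integral_const_mul]
  exact add_integral_le_of_deriv_add_nonpos hF (continuousOn_const.mul hG)
    (fun s hs => hdissip s hs (hbarrier s hs)) t ht

/-- Integrated energy bound: under the hypotheses of the barrier argument, for every `t ≥ 0`
one has `F(t) + (1/2)·∫₀ᵗ G(s) ds ≤ F(0) < δ₀`. -/
theorem integrated_energy_bound
    (F F' G : ℝ → ℝ) (C M₁ δ₀ : ℝ)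
    (hC : 0 < C) (hM₁ : 0 < M₁) (hδ₀ : 0 < δ₀)
    (hsmall : C * M₁ * (δ₀ + δ₀ ^ 2 + δ₀ ^ 3) < 1 / 2)
    (hF : ∀ t ∈ Ici (0 : ℝ), HasDerivWithinAt F (F' t) (Ici (0 : ℝ)) t)
    (hFpos : ∀ t ∈ Ici (0 : ℝ), 0 ≤ F t)
    (hG : ContinuousOn G (Ici (0 : ℝ)))
    (hGpos : ∀ t ∈ Ici (0 : ℝ), 0 ≤ G t)
    (hineq : ∀ t ∈ Ici (0 : ℝ),
      F' t + (1 - C * M₁ * (F t + F t ^ 2 + F t ^ 3)) * G t ≤ 0)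
    (h0 : F 0 < δ₀) :
    ∀ t ∈ Ici (0 : ℝ),
      F t + (1 / 2) * (∫ s in (0 : ℝ)..t, G s) ≤ F 0 ∧ F 0 < δ₀ :=
  integrated_energy_bound_general F F' G C M₁ δ₀ hC hM₁ hsmall hF hFpos hG hGpos hineq h0
end
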